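/- Let C be an oriented linear chord diagram of d chords such that Γ_{s_A} + Γ_{s_B} = d + 2, where s_A (resp. s_B) denotes the state of C sending every chord to A (resp. to B). Then for every chord (i,j) of C, the integers i and j have different parity. -/

import Mathlib

open Equiv LaurentPolynomial Finset

/-- `C` is an oriented linear chord diagram of `d` chords: a set of `d` ordered pairs of
integers whose entries (first and second components together) are exactly `{1, …, 2d}`.
(Together with `C.card = d` this forces all `2d` entries to be pairwise distinct.) -/
def IsOLCD (d : ℕ) (C : Finset (ℤ × ℤ)) : Prop :=
  C.card = d ∧ (C.image Prod.fst ∪ C.image Prod.snd) = Finset.Icc 1 (2 * (d : ℤ))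

/-- The set `R_c` of transpositions of `ℤ` associated to a chord `c = (i, j)` carrying the
label `lbl` (`true` = `A`, `false` = `B`). -/
def Rset (lbl : Bool) (c : ℤ × ℤ) : Set (Equiv.Perm ℤ) :=
  if lbl = decide (c.1 < c.2) then
    {Equiv.swap c.1 (c.2 - 1), Equiv.swap (c.1 - 1) c.2}
  else
    {Equiv.swap c.1 c.2, Equiv.swap (c.1 - 1) (c.2 - 1)}

/-- The subgroup of permutations generated by `⋃_{c ∈ C} R_c`, for a state `s` of `C`. -/
def stateGroup (C : Finset (ℤ × ℤ)) (s : {c // c ∈ C} → Bool) : Subgroup (Equiv.Perm ℤ) :=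
  Subgroup.closure (⋃ c : {c // c ∈ C}, Rset (s c) c.1)

/-- `Γ_s`: the number of orbits of the action of `stateGroup C s` on `{0, 1, …, 2d}`,
counted as the number of distinct orbits of elements of `{0, …, 2d}`. -/
noncomputable def Gamma (d : ℕ) (C : Finset (ℤ × ℤ)) (s : {c // c ∈ C} → Bool) : ℕ :=
  ((fun x : ℤ => MulAction.orbit (stateGroup C s) x) '' Set.Icc (0 : ℤ) (2 * d)).ncard

/-- `⟨C|s⟩ = A^(|s⁻¹(A)| - |s⁻¹(B)|) * (-A² - A⁻²)^(Γ_s - 1)`. -/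
noncomputable def bracketTerm (d : ℕ) (C : Finset (ℤ × ℤ)) (s : {c // c ∈ C} → Bool) :
    LaurentPolynomial ℤ :=
  T (((Finset.univ.filter fun c => s c = true).card : ℤ) -
      ((Finset.univ.filter fun c => s c = false).card : ℤ)) *
    (-T 2 - T (-2)) ^ (Gamma d C s - 1)

/-- The bracket polynomial `⟨C⟩ = Σ_s ⟨C|s⟩`, summing over all `2^d` states of `C`. -/
noncomputable def bracket (d : ℕ) (C : Finset (ℤ × ℤ)) : LaurentPolynomial ℤ :=
  ∑ s : ({c // c ∈ C} → Bool), bracketTerm d C s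

/-- The maximal exponent occurring in a Laurent polynomial (junk value `0` for `f = 0`). -/
noncomputable def maxDeg (f : LaurentPolynomial ℤ) : ℤ := WithBot.unbotD 0 f.coeff.support.max

/-- The minimal exponent occurring in a Laurent polynomial (junk value `0` for `f = 0`). -/
noncomputable def minDeg (f : LaurentPolynomial ℤ) : ℤ := WithTop.untopD 0 f.coeff.support.min

/-- The span of a Laurent polynomial: maximal minus minimal exponent. -/
noncomputable def spanL (f : LaurentPolynomial ℤ) : ℤ := maxDeg f - minDeg f

/-!
Over `𝔽₂`, attach to each state `s` Zulli's trip matrix `M_s = D_s + T`, where `T` records the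
interlacing of the chords and `D_s` is diagonal. If `F` is a function on the orbits of the state
group, then `c ↦ F(orbit i_c) + F(orbit (i_c - 1))` lies in the kernel of `M_s`: the interlacing
sum telescopes along the interior of each chord, and the generators of the state group identify
what is left. Only constant `F` are lost, so `Γ_s ≤ corank M_s + 1`.

Since `M_{s_B} = M_{s_A} + 1`, the two kernels meet trivially, and the hypothesis forces
`𝔽₂^d = ker M_{s_A} ⊕ ker (M_{s_A} + 1)`: `M_{s_A}` is a symmetric idempotent. For such a matrix
over `𝔽₂` every row sum equals the diagonal entry, which says that an even number of endpoints
lies strictly inside each chord, i.e. `j - i` is odd.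
-/

open Equiv MulAction Module Matrix

theorem Int.sum_Ioc_sub {M : Type*} [AddCommGroup M] (f : ℤ → M) {a b : ℤ} (hab : a ≤ b) :
    ∑ p ∈ Finset.Ioc a b, (f p - f (p - 1)) = f b - f a := by
  induction b, hab using Int.leInduction with
  | base => simp
  | succ n _ ih =>
    have : Finset.Ioc a (n + 1) = insert (n + 1) (Finset.Ioc a n) := by
      ext p; simp only [Finset.mem_Ioc, Finset.mem_insert]; omega
    rw [this, Finset.sum_insert (by simp), ih, add_sub_cancel_right]
    abel

theorem Int.eq_of_forall_Ioc_eq_sub_one {M : Type*} [AddCommGroup M] {f : ℤ → M} {a b : ℤ}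
    (hab : a ≤ b) (hf : ∀ p ∈ Finset.Ioc a b, f p = f (p - 1)) : f b = f a := by
  rw [← sub_eq_zero, ← Int.sum_Ioc_sub f hab]
  exact Finset.sum_eq_zero fun p hp => sub_eq_zero.mpr (hf p hp)

theorem MulAction.orbit_eq_of_swap_mem {α : Type*} [DecidableEq α] {G : Subgroup (Perm α)}
    {u v : α} (h : swap u v ∈ G) : orbit G u = orbit G v :=
  orbit_eq_iff.mpr ⟨⟨swap u v, h⟩, swap_apply_right u v⟩

theorem Module.End.isIdempotentElem_of_finrank_le {K V : Type*} [Field K] [AddCommGroup V]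
    [Module K V] [FiniteDimensional K V] (f : Module.End K V)
    (h : finrank K V ≤ finrank K (LinearMap.ker f) + finrank K (LinearMap.ker (f - 1))) :
    IsIdempotentElem f := by
  have hinf : LinearMap.ker f ⊓ LinearMap.ker (f - 1) = ⊥ := by
    refine eq_bot_iff.mpr fun v hv => ?_
    obtain ⟨h0, h1⟩ := Submodule.mem_inf.mp hv
    simp_all [LinearMap.mem_ker]
  have hsup : LinearMap.ker f ⊔ LinearMap.ker (f - 1) = ⊤ := by
    refine Submodule.eq_top_of_finrank_eq (le_antisymm (Submodule.finrank_le _) ?_)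
    have := Submodule.finrank_sup_add_finrank_inf_eq (LinearMap.ker f) (LinearMap.ker (f - 1))
    rw [hinf, finrank_bot] at this
    omega
  refine LinearMap.ext fun v => ?_
  obtain ⟨y, hy, z, hz, rfl⟩ := Submodule.mem_sup.mp (hsup ▸ Submodule.mem_top : v ∈ _)
  rw [LinearMap.mem_ker] at hy
  rw [LinearMap.mem_ker, LinearMap.sub_apply, Module.End.one_apply, sub_eq_zero] at hz
  simp [hy, hz]

theorem LinearMap.finrank_le_add_one_of_ker_le_span_singleton {K V W : Type*} [Field K]
    [AddCommGroup V] [Module K V] [AddCommGroup W] [Module K W] [FiniteDimensional K V]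
    [FiniteDimensional K W]
    (φ : V →ₗ[K] W) {U : Submodule K W} {v : V} (hrange : LinearMap.range φ ≤ U)
    (hker : LinearMap.ker φ ≤ K ∙ v) : finrank K V ≤ finrank K U + 1 := by
  have hU := Submodule.finrank_mono hrange
  have hv := (Submodule.finrank_mono hker).trans (finrank_span_le_card ({v} : Set V))
  rw [Set.toFinset_singleton, Finset.card_singleton] at hv
  have := LinearMap.finrank_range_add_finrank_ker φ
  omega

theorem Matrix.IsSymm.sum_apply_eq_diag_of_isIdempotentElem {n : Type*} [Fintype n]
    {M : Matrix n n (ZMod 2)} (hsymm : M.IsSymm) (hidem : IsIdempotentElem M) (i : n) :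
    ∑ j, M i j = M i i := by
  have hsq : ∀ x : ZMod 2, x * x = x := by decide
  calc ∑ j, M i j = ∑ j, M i j * M j i := by simp only [hsymm.apply, hsq]
    _ = M i i := by rw [← Matrix.mul_apply, hidem.eq]

section ChordDiagram

variable {d : ℕ} {C : Finset (ℤ × ℤ)}

theorem IsOLCD.injOn_fst_injOn_snd_disjoint (hC : IsOLCD d C) :
    Set.InjOn Prod.fst (C : Set (ℤ × ℤ)) ∧ Set.InjOn Prod.snd (C : Set (ℤ × ℤ)) ∧
      Disjoint (C.image Prod.fst) (C.image Prod.snd) := by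
  obtain ⟨hcard, hcover⟩ := hC
  have hU : (C.image Prod.fst ∪ C.image Prod.snd).card = 2 * d := by
    rw [hcover, Int.card_Icc]; omega
  have h1 := C.card_image_le (f := Prod.fst)
  have h2 := C.card_image_le (f := Prod.snd)
  have h12 := Finset.card_union_le (C.image Prod.fst) (C.image Prod.snd)
  exact ⟨Finset.card_image_iff.mp (by omega), Finset.card_image_iff.mp (by omega),
    Finset.card_union_eq_card_add_card.mp (by omega)⟩

theorem IsOLCD.sum_fst_add_snd {M : Type*} [AddCommMonoid M] (hC : IsOLCD d C) (g : ℤ → M) :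
    ∑ c ∈ C, (g c.1 + g c.2) = ∑ p ∈ Finset.Icc 1 (2 * (d : ℤ)), g p := by
  obtain ⟨hfst, hsnd, hdisj⟩ := hC.injOn_fst_injOn_snd_disjoint
  rw [Finset.sum_add_distrib, ← Finset.sum_image hfst, ← Finset.sum_image hsnd,
    ← Finset.sum_union hdisj, hC.2]

theorem IsOLCD.fst_mem (hC : IsOLCD d C) {c : ℤ × ℤ} (hc : c ∈ C) :
    c.1 ∈ Finset.Icc 1 (2 * (d : ℤ)) :=
  hC.2 ▸ Finset.mem_union_left _ (Finset.mem_image_of_mem _ hc)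

theorem IsOLCD.snd_mem (hC : IsOLCD d C) {c : ℤ × ℤ} (hc : c ∈ C) :
    c.2 ∈ Finset.Icc 1 (2 * (d : ℤ)) :=
  hC.2 ▸ Finset.mem_union_right _ (Finset.mem_image_of_mem _ hc)

theorem IsOLCD.exists_endpoint (hC : IsOLCD d C) {p : ℤ} (hp : p ∈ Finset.Icc 1 (2 * (d : ℤ))) :
    ∃ c ∈ C, c.1 = p ∨ c.2 = p := by
  rw [← hC.2, Finset.mem_union, Finset.mem_image, Finset.mem_image] at hp
  rcases hp with ⟨c, hc, rfl⟩ | ⟨c, hc, rfl⟩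
  exacts [⟨c, hc, .inl rfl⟩, ⟨c, hc, .inr rfl⟩]

theorem IsOLCD.endpoints_ne (hC : IsOLCD d C) {c k : ℤ × ℤ} (hc : c ∈ C) (hk : k ∈ C)
    (hck : c ≠ k) : c.1 ≠ k.1 ∧ c.1 ≠ k.2 ∧ c.2 ≠ k.1 ∧ c.2 ≠ k.2 := by
  obtain ⟨hfst, hsnd, hdisj⟩ := hC.injOn_fst_injOn_snd_disjoint
  have cross {x y : ℤ × ℤ} (hx : x ∈ C) (hy : y ∈ C) : x.1 ≠ y.2 := fun h =>
    Finset.disjoint_left.mp hdisj (Finset.mem_image_of_mem _ hx) (h ▸ Finset.mem_image_of_mem _ hy)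
  exact ⟨fun h => hck (hfst hc hk h), cross hc hk, fun h => cross hk hc h.symm,
    fun h => hck (hsnd hc hk h)⟩

theorem IsOLCD.fst_ne_snd (hC : IsOLCD d C) {c : ℤ × ℤ} (hc : c ∈ C) : c.1 ≠ c.2 := by
  obtain ⟨-, -, hdisj⟩ := hC.injOn_fst_injOn_snd_disjoint
  exact fun h => Finset.disjoint_left.mp hdisj (Finset.mem_image_of_mem _ hc)
    (h ▸ Finset.mem_image_of_mem _ hc)

noncomputable def chordInterior (c : ℤ × ℤ) : Finset ℤ := Finset.Ioo (min c.1 c.2) (max c.1 c.2)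

/-- For chords with four distinct endpoints, `1` exactly when they cross. -/
noncomputable def interlace (c k : ℤ × ℤ) : ZMod 2 :=
  (if k.1 ∈ chordInterior c then 1 else 0) + (if k.2 ∈ chordInterior c then 1 else 0)

theorem interlace_self (c : ℤ × ℤ) : interlace c c = 0 := by
  simp only [interlace, chordInterior, Finset.mem_Ioo]
  split_ifs <;> first | rfl | omega

theorem interlace_comm {c k : ℤ × ℤ} (h : c.1 ≠ k.1 ∧ c.1 ≠ k.2 ∧ c.2 ≠ k.1 ∧ c.2 ≠ k.2) :
    interlace c k = interlace k c := by
  simp only [interlace, chordInterior, Finset.mem_Ioo]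
  split_ifs <;> first | rfl | decide | omega

theorem IsOLCD.chordInterior_subset (hC : IsOLCD d C) {c : ℤ × ℤ} (hc : c ∈ C) :
    chordInterior c ⊆ Finset.Icc 1 (2 * (d : ℤ)) := by
  have h1 := Finset.mem_Icc.mp (hC.fst_mem hc)
  have h2 := Finset.mem_Icc.mp (hC.snd_mem hc)
  intro p hp
  rw [chordInterior, Finset.mem_Ioo] at hp
  rw [Finset.mem_Icc]
  omega

theorem IsOLCD.sum_interlace_mul (hC : IsOLCD d C) {c : ℤ × ℤ} (hc : c ∈ C) {g : ℤ → ZMod 2}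
    (hg : ∀ k ∈ C, g k.1 = g k.2) :
    ∑ k ∈ C, interlace c k * g k.1 = ∑ p ∈ chordInterior c, g p := by
  have hk : ∀ k ∈ C, interlace c k * g k.1 =
      (if k.1 ∈ chordInterior c then g k.1 else 0) +
        (if k.2 ∈ chordInterior c then g k.2 else 0) := fun k hk => by
    simp only [interlace, add_mul, ite_mul, one_mul, zero_mul, hg k hk]
  rw [Finset.sum_congr rfl hk, hC.sum_fst_add_snd (fun p => if p ∈ chordInterior c then g p else 0),
    Finset.sum_ite_mem, Finset.inter_eq_right.mpr (hC.chordInterior_subset hc)]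

end ChordDiagram

section TripMatrix

variable {d : ℕ} {C : Finset (ℤ × ℤ)}

def diagEntry (b : Bool) (c : ℤ × ℤ) : ZMod 2 := if b = decide (c.1 < c.2) then 0 else 1

noncomputable def tripMatrix (C : Finset (ℤ × ℤ)) (s : {c // c ∈ C} → Bool) :
    Matrix {c // c ∈ C} {c // c ∈ C} (ZMod 2) :=
  Matrix.diagonal (fun c => diagEntry (s c) c.1) + Matrix.of fun c k => interlace c.1 k.1

theorem tripMatrix_false_eq_sub_one :
    tripMatrix C (fun _ => false) = tripMatrix C (fun _ => true) - 1 := by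
  have hdiag : ∀ c : ℤ × ℤ, diagEntry false c = diagEntry true c - 1 := fun c => by
    unfold diagEntry; cases decide (c.1 < c.2) <;> decide
  simp only [tripMatrix, hdiag, ← Matrix.diagonal_one, ← Matrix.diagonal_sub]
  abel

theorem IsOLCD.tripMatrix_isSymm (hC : IsOLCD d C) (s : {c // c ∈ C} → Bool) :
    (tripMatrix C s).IsSymm := by
  refine Matrix.IsSymm.ext fun c k => ?_
  rcases eq_or_ne c k with rfl | hck
  · rfl
  · simp only [tripMatrix, Matrix.add_apply, Matrix.diagonal_apply_ne _ hck,
      Matrix.diagonal_apply_ne _ hck.symm, Matrix.of_apply]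
    rw [interlace_comm (hC.endpoints_ne k.2 c.2 (Subtype.coe_ne_coe.mpr hck.symm))]

theorem IsOLCD.sum_tripMatrix_apply (hC : IsOLCD d C) (s : {c // c ∈ C} → Bool)
    (c : {c // c ∈ C}) :
    ∑ k, tripMatrix C s c k = tripMatrix C s c c + (chordInterior c.1).card := by
  have hsum := hC.sum_interlace_mul c.2 (g := 1) fun _ _ => rfl
  simp only [Pi.one_apply, mul_one, Finset.sum_const, nsmul_one] at hsum
  simp only [tripMatrix, Matrix.add_apply, Matrix.of_apply, Finset.sum_add_distrib,
    Matrix.diagonal_apply, Finset.sum_ite_eq, Finset.mem_univ, if_true, interlace_self, add_zero,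
    Finset.sum_coe_sort C (fun k => interlace c.1 k), hsum]

end TripMatrix

section Orbits

variable {d : ℕ} {C : Finset (ℤ × ℤ)} (s : {c // c ∈ C} → Bool)

theorem Rset_subset_stateGroup (c : {c // c ∈ C}) : Rset (s c) c.1 ⊆ stateGroup C s :=
  (Set.subset_iUnion (fun c => Rset (s c) c.1) c).trans Subgroup.subset_closure

theorem orbit_stateGroup_eq_of_eq {c : {c // c ∈ C}} (h : s c = decide (c.1.1 < c.1.2)) :
    orbit (stateGroup C s) c.1.1 = orbit (stateGroup C s) (c.1.2 - 1) ∧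
      orbit (stateGroup C s) (c.1.1 - 1) = orbit (stateGroup C s) c.1.2 := by
  have hR := Rset_subset_stateGroup s c
  rw [Rset, if_pos h] at hR
  exact ⟨orbit_eq_of_swap_mem (hR (Set.mem_insert _ _)),
    orbit_eq_of_swap_mem (hR (Set.mem_insert_of_mem _ rfl))⟩

theorem orbit_stateGroup_eq_of_ne {c : {c // c ∈ C}} (h : s c ≠ decide (c.1.1 < c.1.2)) :
    orbit (stateGroup C s) c.1.1 = orbit (stateGroup C s) c.1.2 ∧
      orbit (stateGroup C s) (c.1.1 - 1) = orbit (stateGroup C s) (c.1.2 - 1) := by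
  have hR := Rset_subset_stateGroup s c
  rw [Rset, if_neg h] at hR
  exact ⟨orbit_eq_of_swap_mem (hR (Set.mem_insert _ _)),
    orbit_eq_of_swap_mem (hR (Set.mem_insert_of_mem _ rfl))⟩

def jump (G : Subgroup (Perm ℤ)) (F : Set ℤ → ZMod 2) (p : ℤ) : ZMod 2 :=
  F (orbit G p) + F (orbit G (p - 1))

theorem jump_fst_eq_jump_snd (F : Set ℤ → ZMod 2) (c : {c // c ∈ C}) :
    jump (stateGroup C s) F c.1.1 = jump (stateGroup C s) F c.1.2 := by
  by_cases h : s c = decide (c.1.1 < c.1.2)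
  · obtain ⟨e1, e2⟩ := orbit_stateGroup_eq_of_eq s h
    rw [jump, jump, e1, e2, add_comm]
  · obtain ⟨e1, e2⟩ := orbit_stateGroup_eq_of_ne s h
    rw [jump, jump, e1, e2]

theorem sum_chordInterior_jump (G : Subgroup (Perm ℤ)) (F : Set ℤ → ZMod 2) {c : ℤ × ℤ}
    (hc : c.1 ≠ c.2) :
    ∑ p ∈ chordInterior c, jump G F p =
      F (orbit G (max c.1 c.2 - 1)) + F (orbit G (min c.1 c.2)) := by
  have hIoc : chordInterior c = Finset.Ioc (min c.1 c.2) (max c.1 c.2 - 1) := by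
    ext p; simp only [chordInterior, Finset.mem_Ioo, Finset.mem_Ioc]; omega
  simp only [hIoc, jump, ← CharTwo.sub_eq_add]
  exact Int.sum_Ioc_sub (fun p => F (orbit G p)) (by omega)

theorem IsOLCD.tripMatrix_mulVec_jump (hC : IsOLCD d C) (F : Set ℤ → ZMod 2) :
    tripMatrix C s *ᵥ (fun k => jump (stateGroup C s) F k.1.1) = 0 := by
  funext c
  have hsum := hC.sum_interlace_mul c.2 (g := jump (stateGroup C s) F)
    fun k hk => jump_fst_eq_jump_snd s F ⟨k, hk⟩
  rw [sum_chordInterior_jump _ _ (hC.fst_ne_snd c.2)] at hsum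
  simp only [tripMatrix, Matrix.add_mulVec, Matrix.mulVec_diagonal, Pi.add_apply, Pi.zero_apply]
  simp only [Matrix.mulVec, dotProduct, Matrix.of_apply,
    Finset.sum_coe_sort C (fun k => interlace c.1 k * jump (stateGroup C s) F k.1), hsum]
  by_cases hs : s c = decide (c.1.1 < c.1.2)
  · obtain ⟨e1, e2⟩ := orbit_stateGroup_eq_of_eq s hs
    grind [diagEntry, jump]
  · obtain ⟨e1, e2⟩ := orbit_stateGroup_eq_of_ne s hs
    grind [diagEntry, jump]

theorem IsOLCD.apply_orbit_eq_of_jump_eq_zero (hC : IsOLCD d C) {F : Set ℤ → ZMod 2}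
    (hF : ∀ c : {c // c ∈ C}, jump (stateGroup C s) F c.1.1 = 0) {z : ℤ}
    (hz : z ∈ Set.Icc 0 (2 * (d : ℤ))) :
    F (orbit (stateGroup C s) z) = F (orbit (stateGroup C s) 0) := by
  refine Int.eq_of_forall_Ioc_eq_sub_one (f := fun p => F (orbit (stateGroup C s) p)) hz.1
    fun p hp => ?_
  have hp' : p ∈ Finset.Icc 1 (2 * (d : ℤ)) := by
    have := hz.2
    rw [Finset.mem_Ioc] at hp
    rw [Finset.mem_Icc]
    omega
  obtain ⟨c, hc, hcp⟩ := hC.exists_endpoint hp'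
  have hsnd := jump_fst_eq_jump_snd s F ⟨c, hc⟩
  rcases hcp with rfl | rfl
  · exact CharTwo.add_eq_zero.mp (hF ⟨c, hc⟩)
  · exact CharTwo.add_eq_zero.mp (hsnd.symm.trans (hF ⟨c, hc⟩))

end Orbits

theorem IsOLCD.gamma_le_finrank_ker_tripMatrix_add_one {d : ℕ} {C : Finset (ℤ × ℤ)}
    (hC : IsOLCD d C) (s : {c // c ∈ C} → Bool) :
    Gamma d C s ≤ finrank (ZMod 2) (LinearMap.ker (tripMatrix C s).toLin') + 1 := by
  set G := stateGroup C s
  set O := (fun x : ℤ => orbit G x) '' Set.Icc (0 : ℤ) (2 * d)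
  have : Fintype O := ((Set.finite_Icc _ _).image _).fintype
  let φ : (O → ZMod 2) →ₗ[ZMod 2] ({c // c ∈ C} → ZMod 2) :=
    LinearMap.pi fun c =>
      (LinearMap.proj (R := ZMod 2) (φ := fun _ : Set ℤ => ZMod 2) (orbit G c.1.1) +
        LinearMap.proj (orbit G (c.1.1 - 1))) ∘ₗ
      Function.ExtendByZero.linearMap (ZMod 2) Subtype.val
  have hφ (w : O → ZMod 2) : φ w = fun c => jump G (Function.extend Subtype.val w 0) c.1.1 := rfl
  have hGamma : Gamma d C s = finrank (ZMod 2) (O → ZMod 2) := by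
    rw [finrank_fintype_fun_eq_card, ← Nat.card_eq_fintype_card, Nat.card_coe_set_eq]
    rfl
  rw [hGamma]
  refine φ.finrank_le_add_one_of_ker_le_span_singleton (v := 1) ?_ fun w hw => ?_
  · rintro _ ⟨w, rfl⟩
    rw [LinearMap.mem_ker, Matrix.toLin'_apply, hφ]
    exact hC.tripMatrix_mulVec_jump s _
  rw [LinearMap.mem_ker, hφ] at hw
  refine Submodule.mem_span_singleton.mpr
    ⟨Function.extend Subtype.val w 0 (orbit G 0), funext fun κ => ?_⟩
  obtain ⟨_, z, hz, rfl⟩ := κ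
  rw [Pi.smul_apply, Pi.one_apply, smul_eq_mul, mul_one,
    ← hC.apply_orbit_eq_of_jump_eq_zero s (congrFun hw) hz]
  exact Subtype.val_injective.extend_apply w 0 ⟨_, z, hz, rfl⟩

/-- if `Γ_{s_A} + Γ_{s_B} = d + 2`, then for every chord `(i, j)` of `C`
the integers `i` and `j` have different parity (equivalently `i + j` is odd). -/
theorem parity_of_gamma_eq (d : ℕ) (C : Finset (ℤ × ℤ)) (hC : IsOLCD d C)
    (h : Gamma d C (fun _ => true) + Gamma d C (fun _ => false) = d + 2) :
    ∀ p ∈ C, Odd (p.1 + p.2) := by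
  intro p hp
  have hA := hC.gamma_le_finrank_ker_tripMatrix_add_one (fun _ => true)
  have hB := hC.gamma_le_finrank_ker_tripMatrix_add_one (fun _ => false)
  rw [tripMatrix_false_eq_sub_one, map_sub, Matrix.toLin'_one, ← Module.End.one_eq_id] at hB
  set M := tripMatrix C (fun _ => true)
  have hidem : IsIdempotentElem M := by
    have hdim : finrank (ZMod 2) ({c // c ∈ C} → ZMod 2) = d := by
      rw [finrank_fintype_fun_eq_card, Fintype.card_coe, hC.1]
    have hLin := Module.End.isIdempotentElem_of_finrank_le (Matrix.toLin' M) (by omega)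
    exact Matrix.toLinAlgEquiv'.symm_apply_apply M ▸ hLin.map Matrix.toLinAlgEquiv'.symm
  have hrow := (hC.tripMatrix_isSymm _).sum_apply_eq_diag_of_isIdempotentElem hidem ⟨p, hp⟩
  rw [hC.sum_tripMatrix_apply, add_eq_left, chordInterior, Int.card_Ioo,
    ZMod.natCast_eq_zero_iff_even] at hrow
  obtain ⟨r, hr⟩ := hrow
  dsimp only at hr
  have hne := hC.fst_ne_snd hp
  rw [Int.odd_iff]
  omega
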